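/- arXiv:1011.1708 — 3 statements merged into one kernel-verified Lean document; each statement's English description precedes it below -/
import Mathlib

section
/- Let T be a string of length n ≥ 0 over a finite alphabet A, and let T′ be the string obtained by replacing one character of T at an arbitrary position by another character of A. Then |n·H₀(T) − n·H₀(T′)| ≤ 4 log₂(n+1) + 3 log₂ |A|. -/
/-!
Writing `n = |T|` and `n_a` for the number of occurrences of `a` in `T`,
`n·H₀(T) = n log₂ n − ∑ₐ f(n_a)` with `f(k) = k log₂ k`. Since `H₀` only depends on the counts,
the modified position may be moved to the front, `T = c :: S` and `T' = c' :: S`. Then the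
difference of the two sides is `(f(m'+1) − f(m')) − (f(m+1) − f(m))` with `m, m' < n`, and each
increment `f(k+1) − f(k) = log₂(k+1) + k log₂(1 + 1/k)` lies in `[0, 2 log₂(n+1)]`, so the
difference is even at most `2 log₂(n+1)`.
-/

open Finset

noncomputable def H0 {A : Type*} [Fintype A] [DecidableEq A] (T : List A) : ℝ :=
  -∑ c : A, ((T.count c : ℝ) / T.length) * Real.logb 2 ((T.count c : ℝ) / T.length)

open Real

noncomputable def natMulLogb (k : ℕ) : ℝ := k * logb 2 k

lemma natMulLogb_le_succ (k : ℕ) : natMulLogb k ≤ natMulLogb (k + 1) := by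
  rcases Nat.eq_zero_or_pos k with rfl | hk
  · simp [natMulLogb]
  have one_le_k : (1 : ℝ) ≤ k := by exact_mod_cast hk
  unfold natMulLogb
  push_cast
  exact mul_le_mul (by linarith) (logb_le_logb_of_le one_lt_two (by linarith) (by linarith))
    (logb_nonneg one_lt_two one_le_k) (by linarith)

lemma add_one_mul_log_add_one_sub_mul_log_le {x : ℝ} (hx : 0 ≤ x) :
    (x + 1) * log (x + 1) - x * log x ≤ log (x + 1) + 1 := by
  rcases hx.eq_or_lt with rfl | hx
  · simp
  have hlog : log (x + 1) - log x ≤ (x + 1) / x - 1 := by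
    rw [← log_div (by positivity) hx.ne']
    exact log_le_sub_one_of_pos (by positivity)
  have : x * (log (x + 1) - log x) ≤ 1 :=
    calc x * (log (x + 1) - log x) ≤ x * ((x + 1) / x - 1) :=
          mul_le_mul_of_nonneg_left hlog hx.le
      _ = 1 := by field_simp; ring
  linarith

lemma natMulLogb_succ_sub_le {k n : ℕ} (hkn : k + 1 ≤ n) :
    natMulLogb (k + 1) - natMulLogb k ≤ 2 * logb 2 (n + 1) := by
  rcases Nat.eq_zero_or_pos k with rfl | hk
  · simp only [natMulLogb, Nat.cast_zero, Nat.cast_one, zero_add, logb_one, mul_zero]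
    have : 0 ≤ logb 2 ((n : ℝ) + 1) := logb_nonneg one_lt_two (by simp)
    linarith
  have hkn_real : (k : ℝ) + 1 ≤ n := by exact_mod_cast hkn
  have hn : (3 : ℝ) ≤ n + 1 := by
    have : (1 : ℝ) ≤ k := by exact_mod_cast hk
    linarith
  have one_le_log : 1 ≤ log (n + 1) := by
    rw [le_log_iff_exp_le (by positivity)]
    linarith [exp_one_lt_d9]
  have log_le : log (k + 1) ≤ log (n + 1) := log_le_log (by positivity) (by linarith)
  have step := add_one_mul_log_add_one_sub_mul_log_le k.cast_nonneg
  unfold natMulLogb logb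
  push_cast
  rw [mul_div_assoc', mul_div_assoc', mul_div_assoc', ← sub_div]
  exact div_le_div_of_nonneg_right (by linarith) (log_nonneg one_le_two)

section

variable {A : Type*} [Fintype A] [DecidableEq A]

lemma List.sum_count_univ (T : List A) : ∑ a : A, T.count a = T.length := by
  simpa using Multiset.sum_count_eq_card (s := univ) (m := (T : Multiset A)) fun a _ => mem_univ a

lemma H0_perm {T T' : List A} (h : T.Perm T') : H0 T = H0 T' := by
  simp only [H0, h.length_eq, h.count_eq]

lemma length_mul_H0 (T : List A) :
    T.length * H0 T = T.length * logb 2 T.length - ∑ a, natMulLogb (T.count a) := by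
  have term : ∀ a : A, (T.length : ℝ) * (T.count a / T.length * logb 2 (T.count a / T.length))
      = natMulLogb (T.count a) - T.count a * logb 2 T.length := by
    intro a
    rcases Nat.eq_zero_or_pos (T.count a) with h | h
    · simp [h, natMulLogb]
    have hn : 0 < T.length := h.trans_le List.count_le_length
    rw [logb_div (by positivity) (by positivity), natMulLogb]
    field_simp
  have hsum : ∑ a : A, (T.count a : ℝ) = T.length := by exact_mod_cast T.sum_count_univ
  simp only [H0, mul_neg, mul_sum, term, sum_sub_distrib, ← sum_mul, hsum]
  ring

lemma sum_count_cons (g : ℕ → ℝ) (c : A) (S : List A) :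
    ∑ a, g ((c :: S).count a) = ∑ a, g (S.count a) + (g (S.count c + 1) - g (S.count c)) := by
  rw [← sub_eq_iff_eq_add', ← sum_sub_distrib, sum_eq_single c]
  · simp
  · intro a _ ha
    simp [Ne.symm ha]
  · simp

lemma abs_length_mul_H0_cons_sub_le (S : List A) (c c' : A) :
    |((c :: S).length : ℝ) * H0 (c :: S) - (c' :: S).length * H0 (c' :: S)| ≤
      2 * logb 2 ((c :: S).length + 1) := by
  have increment_mem : ∀ a : A,
      0 ≤ natMulLogb (S.count a + 1) - natMulLogb (S.count a) ∧
      natMulLogb (S.count a + 1) - natMulLogb (S.count a) ≤ 2 * logb 2 ((c :: S).length + 1) :=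
    fun a => ⟨sub_nonneg.2 (natMulLogb_le_succ _),
      natMulLogb_succ_sub_le (by simpa using List.count_le_length)⟩
  rw [length_mul_H0, length_mul_H0, sum_count_cons, sum_count_cons]
  simp only [List.length_cons]
  rw [show ∀ x z u v : ℝ, x - (z + u) - (x - (z + v)) = v - u by intros; ring]
  exact abs_sub_le_of_nonneg_of_le (increment_mem c').1 (increment_mem c').2
    (increment_mem c).1 (increment_mem c).2

end

theorem stmt3 {A : Type*} [Fintype A] [DecidableEq A]
    (T T' T₁ T₂ : List A) (c c' : A)
    (hT : T = T₁ ++ c :: T₂) (hT' : T' = T₁ ++ c' :: T₂) :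
    |(T.length : ℝ) * H0 T - (T.length : ℝ) * H0 T'| ≤
      4 * Real.logb 2 (T.length + 1) + 3 * Real.logb 2 (Fintype.card A) := by
  subst hT hT'
  rw [List.perm_middle.length_eq, H0_perm List.perm_middle, H0_perm List.perm_middle]
  have key := abs_length_mul_H0_cons_sub_le (T₁ ++ T₂) c c'
  simp only [List.length_cons] at key ⊢
  have log_length_nonneg : 0 ≤ logb 2 (((T₁ ++ T₂).length + 1 : ℕ) + 1 : ℝ) :=
    logb_nonneg one_lt_two (le_add_of_nonneg_left (Nat.cast_nonneg _))
  have log_card_nonneg : 0 ≤ logb 2 (Fintype.card A) :=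
    logb_nonneg one_lt_two (by exact_mod_cast Fintype.card_pos_iff.2 ⟨c⟩)
  linarith
end

section
/- Let T be a string of length n over a finite alphabet A and let T⁻ be obtained from T by deleting the character c at some position. If p and p⁻ denote the empirical distributions of T and T⁻ (with n ≥ 2 and at least one character of T different from c), then the L1 distance satisfies 2/(n(n−1)) ≤ ||p − p⁻||₁ ≤ 2/n; in fact ||p − p⁻||₁ = 2(n − n_c)/(n(n−1)), where n_c is the number of occurrences of c in T. -/
open Finset

/-!
Deleting one copy of `c` from a list of length `m + 1` shifts the empirical mass of every
`x ≠ c` up by `mₓ / (m (m + 1))` and that of `c` down by the total of these shifts,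
`(m - m_c) / (m (m + 1))`, so the L1 distance is twice that total.
-/

def L1 {A : Type*} [Fintype A] (p q : A → ℝ) : ℝ := ∑ x : A, |p x - q x|

noncomputable def empDist {A : Type*} [Fintype A] [DecidableEq A] (T : List A) : A → ℝ :=
  fun x => (T.count x : ℝ) / T.length

section EmpiricalDistribution

variable {A : Type*} [Fintype A] [DecidableEq A]

theorem empDist_eq_of_perm {T T' : List A} (h : T.Perm T') : empDist T = empDist T' := by
  ext x
  simp only [empDist, h.count_eq, h.length_eq]

theorem sum_count_eq_length (T : List A) : ∑ x : A, (T.count x : ℝ) = T.length := by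
  have h := Multiset.sum_count_eq_card (s := univ) (m := (T : Multiset A)) (by simp)
  simp only [Multiset.coe_count, Multiset.coe_card] at h
  exact_mod_cast h

theorem empDist_cons_sub_empDist (c : A) {S : List A} (hS : S ≠ []) (x : A) :
    empDist (c :: S) x - empDist S x =
      ((if x = c then (S.length : ℝ) else 0) - S.count x) /
        (((S.length : ℝ) + 1) * S.length) := by
  have hm : (S.length : ℝ) ≠ 0 := by exact_mod_cast List.length_pos_iff.mpr hS |>.ne'
  by_cases hxc : x = c
  · subst hxc
    simp only [empDist, List.count_cons_self, List.length_cons]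
    push_cast
    field_simp
    ring
  · simp only [empDist, List.count_cons_of_ne (Ne.symm hxc), List.length_cons, if_neg hxc]
    push_cast
    field_simp
    ring

-- Shaped so that summing over `x` gives `m + (m - 2 m_c)` directly.
theorem abs_empDist_cons_sub_empDist (c : A) {S : List A} (hS : S ≠ []) (x : A) :
    |empDist (c :: S) x - empDist S x| =
      ((S.count x : ℝ) + if x = c then (S.length : ℝ) - 2 * S.count c else 0) /
        (((S.length : ℝ) + 1) * S.length) := by
  rw [empDist_cons_sub_empDist c hS, abs_div, abs_of_nonneg (a := _ * _) (by positivity)]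
  congr 1
  split_ifs with hxc
  · subst hxc
    have : (S.count x : ℝ) ≤ S.length := by exact_mod_cast List.count_le_length
    rw [abs_of_nonneg (by linarith)]
    ring
  · simp

theorem L1_empDist_cons (c : A) {S : List A} (hS : S ≠ []) :
    L1 (empDist (c :: S)) (empDist S) =
      2 * ((S.length : ℝ) - S.count c) / (((S.length : ℝ) + 1) * S.length) := by
  simp only [L1, abs_empDist_cons_sub_empDist c hS, ← sum_div, sum_add_distrib,
    sum_count_eq_length, sum_ite_eq', mem_univ, if_true]
  ring

theorem L1_empDist_of_perm_cons {T S : List A} {c : A} (h : T.Perm (c :: S)) (hS : S ≠ []) :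
    L1 (empDist T) (empDist S) =
      2 * ((T.length : ℝ) - T.count c) / ((T.length : ℝ) * ((T.length : ℝ) - 1)) := by
  rw [empDist_eq_of_perm h, L1_empDist_cons c hS, h.length_eq, h.count_eq]
  simp only [List.length_cons, List.count_cons_self]
  push_cast
  ring

end EmpiricalDistribution

theorem stmt4 {A : Type*} [Fintype A] [DecidableEq A]
    (T T₁ T₂ : List A) (c : A)
    (hT : T = T₁ ++ c :: T₂) (hn : 2 ≤ T.length)
    (hx : ∃ x ∈ T, x ≠ c) :
    L1 (empDist T) (empDist (T₁ ++ T₂)) =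
        2 * ((T.length : ℝ) - T.count c) / ((T.length : ℝ) * ((T.length : ℝ) - 1)) ∧
    2 / ((T.length : ℝ) * ((T.length : ℝ) - 1)) ≤ L1 (empDist T) (empDist (T₁ ++ T₂)) ∧
    L1 (empDist T) (empDist (T₁ ++ T₂)) ≤ 2 / (T.length : ℝ) := by
  have hperm : T.Perm (c :: (T₁ ++ T₂)) := hT ▸ List.perm_middle
  have hS : T₁ ++ T₂ ≠ [] := by
    rintro hnil
    simp [hperm.length_eq, hnil] at hn
  rw [L1_empDist_of_perm_cons hperm hS]
  have hc_pos : (1 : ℝ) ≤ T.count c := by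
    exact_mod_cast List.count_pos_iff.mpr (hperm.mem_iff.mpr List.mem_cons_self)
  have hc_lt : (T.count c : ℝ) + 1 ≤ T.length := by
    exact_mod_cast List.count_lt_length_iff.mpr hx
  have hden : (0 : ℝ) < T.length * (T.length - 1) := by nlinarith
  refine ⟨rfl, ?_, ?_⟩
  · gcongr
    linarith
  · calc 2 * ((T.length : ℝ) - T.count c) / (T.length * (T.length - 1))
        ≤ 2 * ((T.length : ℝ) - 1) / (T.length * (T.length - 1)) := by gcongr
      _ = 2 / T.length := by
        rw [mul_comm (T.length : ℝ), ← div_div, mul_div_cancel_right₀ _ (by linarith)]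
end

section
/- Let T and T′ be strings over a finite alphabet A, of lengths n and n′ respectively, with edit distance one between them (T′ is obtained from T by a single character replacement, insertion, or deletion). Then for every integer k ≥ 0, |n·H_k(T) − n′·H_k(T′)| ≤ C·(k+1)·(log₂(n+1) + log₂ |A|) for some absolute constant C (independent of T, T′, k, n, A). -/
open Finset

def ctxStr {A : Type*} [DecidableEq A] (T s : List A) : List A :=
  ((List.range T.length).filter (fun i =>
      decide (s.length ≤ i ∧ (T.drop (i - s.length)).take s.length = s))).filterMap
    (fun i => T[i]?)

noncomputable def Hk {A : Type*} [Fintype A] [DecidableEq A] (k : ℕ) (T : List A) : ℝ :=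
  (1 / (T.length : ℝ)) *
    ∑ s : Fin k → A, ((ctxStr T (List.ofFn s)).length : ℝ) * H0 (ctxStr T (List.ofFn s))

/-!
Writing `g x = x log₂ x`, the weighted entropy `|S| H₀(S)` is `g |S| - ∑ c, g (count c S)`, so
`n H_k(T)` is a function of the number of occurrences in `T` of each pair (length-`k` context,
character). As `0 ≤ g (m + 1) - g m ≤ log₂ (m + 1) + 2`, on strings of length at most `N` this
function is Lipschitz for the `ℓ¹` distance between count vectors, with constant
`2 (log₂ (N + 1) + 2)`. Inserting one character
changes only the pairs whose window contains the new position: at most `k` pairs disappear and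
`k + 1` appear. A replacement is a deletion followed by an insertion, and for `n ≥ 1` we have
`log₂ (n + 2) + 2 ≤ 4 log₂ (n + 1)`; for `n = 0` the left-hand side vanishes.
-/

open Real

lemma logb_two_natCast_nonneg (n : ℕ) : 0 ≤ logb 2 n :=
  div_nonneg (log_natCast_nonneg n) (log_nonneg one_le_two)

noncomputable def mulLog2 (x : ℝ) : ℝ := x * logb 2 x

lemma mulLog2_natCast_mono {a b : ℕ} (h : a ≤ b) : mulLog2 a ≤ mulLog2 b := by
  rcases Nat.eq_zero_or_pos a with rfl | ha
  · simpa [mulLog2] using mul_nonneg (Nat.cast_nonneg b) (logb_two_natCast_nonneg b)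
  · have h1 : (1 : ℝ) ≤ a := by exact_mod_cast ha
    have hab : (a : ℝ) ≤ b := by exact_mod_cast h
    exact mul_le_mul hab (logb_le_logb_of_le one_lt_two (by linarith) hab)
      (logb_nonneg one_lt_two h1) (by linarith)

lemma mulLog2_succ_sub_le (n : ℕ) : mulLog2 (n + 1) - mulLog2 n ≤ logb 2 (n + 1) + 2 := by
  rcases Nat.eq_zero_or_pos n with rfl | hn
  · norm_num [mulLog2]
  have hn : (0 : ℝ) < n := by exact_mod_cast hn
  have hsplit : mulLog2 (n + 1) - mulLog2 n = logb 2 (n + 1) + n * logb 2 ((n + 1) / n) := by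
    rw [logb_div (by positivity) hn.ne', mulLog2, mulLog2]
    ring
  have hlog : log ((n + 1) / n) ≤ 1 / n := by
    rw [add_div, div_self hn.ne']
    linarith [log_le_sub_one_of_pos (x := 1 + 1 / n) (by positivity)]
  have hlog2 : 1 / 2 < log 2 := by linarith [log_two_gt_d9]
  have hcorr : n * logb 2 ((n + 1) / n) ≤ 2 := by
    calc n * logb 2 ((n + 1) / n) ≤ n * ((1 / n) / log 2) := by
          rw [logb]; gcongr
      _ = 1 / log 2 := by field_simp
      _ ≤ 2 := by rw [div_le_iff₀ (by linarith)]; linarith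
  linarith

lemma mulLog2_sub_le {a b N : ℕ} (hab : a ≤ b) (hbN : b ≤ N) :
    mulLog2 b - mulLog2 a ≤ (b - a) * (logb 2 (N + 1) + 2) := by
  induction b, hab using Nat.le_induction with
  | base => simp
  | succ b hab ih =>
    have hstep := mulLog2_succ_sub_le b
    have hmono : logb 2 (b + 1) ≤ logb 2 (N + 1) :=
      logb_le_logb_of_le one_lt_two (by positivity) (by exact_mod_cast (by omega : b + 1 ≤ N + 1))
    push_cast
    linarith [ih (by omega)]

lemma abs_mulLog2_sub_le {a b N : ℕ} (ha : a ≤ N) (hb : b ≤ N) :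
    |mulLog2 a - mulLog2 b| ≤ |(a : ℝ) - b| * (logb 2 (N + 1) + 2) := by
  rcases le_total a b with h | h
  · rw [abs_sub_comm, abs_of_nonneg (sub_nonneg.2 (mulLog2_natCast_mono h)), abs_sub_comm,
      abs_of_nonneg (sub_nonneg.2 (by exact_mod_cast h))]
    exact mulLog2_sub_le h hb
  · rw [abs_of_nonneg (sub_nonneg.2 (mulLog2_natCast_mono h)),
      abs_of_nonneg (sub_nonneg.2 (by exact_mod_cast h))]
    exact mulLog2_sub_le h ha

lemma length_ctxStr_le {A : Type*} [DecidableEq A] (T s : List A) :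
    (ctxStr T s).length ≤ T.length :=
  (List.length_filterMap_le _ _).trans ((List.length_filter_le _ _).trans_eq List.length_range)

section Entropy

variable {A : Type*} [Fintype A] [DecidableEq A]

lemma sum_count_eq_length_s10 (l : List A) : ∑ c, l.count c = l.length := by
  simpa using Multiset.sum_count_eq_card (s := univ) (m := (l : Multiset A)) (by simp)

lemma length_mul_H0_s10 (l : List A) :
    l.length * H0 l = mulLog2 l.length - ∑ c, mulLog2 (l.count c) := by
  rcases eq_or_ne l [] with rfl | hl
  · simp [H0, mulLog2]
  have hlen : (l.length : ℝ) ≠ 0 := by simpa using hl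
  have hterm : ∀ c, l.length * ((l.count c / l.length) * logb 2 (l.count c / l.length)) =
      mulLog2 (l.count c) - l.count c * logb 2 l.length := by
    intro c
    rcases Nat.eq_zero_or_pos (l.count c) with hc | hc
    · simp [hc, mulLog2]
    · rw [logb_div (by positivity) hlen, mulLog2]
      field_simp
  have hsum : ∑ c, (l.count c : ℝ) = l.length := by exact_mod_cast sum_count_eq_length_s10 l
  rw [H0, mul_neg, mul_sum, sum_congr rfl fun c _ => hterm c, sum_sub_distrib, ← sum_mul, hsum,
    mulLog2]
  ring

lemma abs_length_mul_H0_sub_le {N : ℕ} {l l' : List A} (hl : l.length ≤ N)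
    (hl' : l'.length ≤ N) :
    |l.length * H0 l - l'.length * H0 l'| ≤
      2 * (∑ c, |(l.count c : ℝ) - l'.count c|) * (logb 2 (N + 1) + 2) := by
  set L := logb 2 ((N : ℝ) + 1) + 2
  set D := ∑ c, |(l.count c : ℝ) - l'.count c|
  have hL : 0 ≤ L := by
    have := logb_two_natCast_nonneg (N + 1)
    push_cast at this
    positivity
  have hlength : |mulLog2 l.length - mulLog2 l'.length| ≤ D * L := by
    have hcast : ∀ m : List A, (m.length : ℝ) = ∑ c, (m.count c : ℝ) := fun m => by
      exact_mod_cast (sum_count_eq_length_s10 m).symm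
    refine (abs_mulLog2_sub_le hl hl').trans (mul_le_mul_of_nonneg_right ?_ hL)
    rw [hcast l, hcast l', ← sum_sub_distrib]
    exact abs_sum_le_sum_abs _ _
  have hcounts : |∑ c, (mulLog2 (l.count c) - mulLog2 (l'.count c))| ≤ D * L := by
    rw [sum_mul]
    refine (abs_sum_le_sum_abs _ _).trans (sum_le_sum fun c _ => ?_)
    exact abs_mulLog2_sub_le (List.count_le_length.trans hl) (List.count_le_length.trans hl')
  rw [length_mul_H0_s10, length_mul_H0_s10]
  calc _ = |(mulLog2 l.length - mulLog2 l'.length) -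
        ∑ c, (mulLog2 (l.count c) - mulLog2 (l'.count c))| := by
        rw [sum_sub_distrib]; congr 1; ring
    _ ≤ D * L + D * L := (abs_sub _ _).trans (add_le_add hlength hcounts)
    _ = _ := by ring

lemma length_mul_Hk (k : ℕ) (T : List A) :
    T.length * Hk k T =
      ∑ s : Fin k → A, (ctxStr T (List.ofFn s)).length * H0 (ctxStr T (List.ofFn s)) := by
  rcases eq_or_ne T [] with rfl | hT
  · simp [Hk, ctxStr]
  · rw [Hk, ← mul_assoc, mul_one_div_cancel (by simpa using hT), one_mul]

lemma abs_length_mul_Hk_sub_le (k : ℕ) {N : ℕ} {T T' : List A} (hT : T.length ≤ N)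
    (hT' : T'.length ≤ N) :
    |T.length * Hk k T - T'.length * Hk k T'| ≤
      2 * (∑ s : Fin k → A, ∑ c, |((ctxStr T (List.ofFn s)).count c : ℝ) -
        (ctxStr T' (List.ofFn s)).count c|) * (logb 2 (N + 1) + 2) := by
  rw [length_mul_Hk, length_mul_Hk, ← sum_sub_distrib, mul_sum, sum_mul]
  refine (abs_sum_le_sum_abs _ _).trans (sum_le_sum fun s _ => ?_)
  exact abs_length_mul_H0_sub_le ((length_ctxStr_le _ _).trans hT)
    ((length_ctxStr_le _ _).trans hT')

lemma H0_eq_zero_of_length_le_one {l : List A} (hl : l.length ≤ 1) : H0 l = 0 := by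
  rw [H0, neg_eq_zero]
  refine sum_eq_zero fun c _ => ?_
  have hc : l.count c ≤ l.length := List.count_le_length
  interval_cases h : l.length <;> interval_cases l.count c <;> simp

lemma Hk_eq_zero_of_length_le_one (k : ℕ) {T : List A} (hT : T.length ≤ 1) : Hk k T = 0 := by
  rw [Hk, sum_eq_zero fun s _ => by
    rw [H0_eq_zero_of_length_le_one ((length_ctxStr_le _ _).trans hT), mul_zero], mul_zero]

end Entropy

section ContextPairs

variable {A : Type*}

def ctxPairAt (k : ℕ) (T : List A) (i : ℕ) : Option (List A × A) :=
  if k ≤ i then T[i]?.map fun a => ((T.drop (i - k)).take k, a) else none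

def ctxPairs (k : ℕ) (T : List A) : List (List A × A) :=
  (List.range T.length).filterMap (ctxPairAt k T)

lemma count_ctxStr [DecidableEq A] (T s : List A) (c : A) :
    (ctxStr T s).count c = (ctxPairs s.length T).count (s, c) := by
  rw [ctxStr, ctxPairs, List.count_filterMap, List.count_filterMap, List.countP_filter]
  refine List.countP_congr fun i hi => ?_
  have hi : i < T.length := List.mem_range.mp hi
  by_cases hk : s.length ≤ i <;> simp [ctxPairAt, hk, hi, and_comm]

lemma ctxPairAt_append_of_lt (k : ℕ) (T₁ T₂ T₂' : List A) {i : ℕ} (hi : i < T₁.length) :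
    ctxPairAt k (T₁ ++ T₂) i = ctxPairAt k (T₁ ++ T₂') i := by
  unfold ctxPairAt
  split_ifs with hk
  · have hctx : ∀ U : List A, ((T₁ ++ U).drop (i - k)).take k = (T₁.drop (i - k)).take k :=
      fun U => by
        rw [List.drop_append_of_le_length (by omega),
          List.take_append_of_le_length (by rw [List.length_drop]; omega)]
    rw [hctx, hctx, List.getElem?_append_left hi, List.getElem?_append_left hi]
  · rfl

lemma ctxPairAt_insert_of_le (k : ℕ) (T₁ T₂ : List A) (c : A) {i : ℕ}
    (hi : T₁.length + k ≤ i) :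
    ctxPairAt k (T₁ ++ c :: T₂) (1 + i) = ctxPairAt k (T₁ ++ T₂) i := by
  unfold ctxPairAt
  rw [if_pos (by omega), if_pos (by omega)]
  have hdrop : (T₁ ++ c :: T₂).drop (1 + i - k) = (T₁ ++ T₂).drop (i - k) := by
    rw [List.drop_append, List.drop_append,
      List.drop_eq_nil_of_le (as := T₁) (i := 1 + i - k) (by omega),
      List.drop_eq_nil_of_le (as := T₁) (i := i - k) (by omega), List.nil_append, List.nil_append,
      show 1 + i - k - T₁.length = (i - k - T₁.length) + 1 by omega, List.drop_succ_cons]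
  have hget : (T₁ ++ c :: T₂)[1 + i]? = (T₁ ++ T₂)[i]? := by
    rw [List.getElem?_append_right (by omega), List.getElem?_append_right (by omega),
      show 1 + i - T₁.length = (i - T₁.length) + 1 by omega, List.getElem?_cons_succ]
  rw [hdrop, hget]

end ContextPairs

section CountBounds

variable {β : Type*}

lemma exists_filterMap_range_eq_of_insert (f f' : ℕ → Option β) {p q n : ℕ} (hpq : p ≤ q)
    (hpn : p ≤ n) (hlo : ∀ i < p, f' i = f i) (hhi : ∀ i, q ≤ i → f' (1 + i) = f i) :
    ∃ X W W' Y : List β, (List.range n).filterMap f = X ++ W ++ Y ∧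
      (List.range (n + 1)).filterMap f' = X ++ W' ++ Y ∧
      W.length ≤ q - p ∧ W'.length ≤ q - p + 1 := by
  have hsplit : ∀ {m a b}, a ≤ b → b ≤ m →
      List.range m = List.range' 0 a ++ List.range' a (b - a) ++ List.range' b (m - b) := by
    intro m a b hab hbm
    rw [List.range_eq_range', show m = a + (b - a) + (m - b) by omega, ← List.range'_append_1,
      ← List.range'_append_1]
    simp only [Nat.zero_add, Nat.add_sub_cancel' hab, Nat.add_sub_cancel_left]
  set b := min q n
  refine ⟨(List.range' 0 p).filterMap f, (List.range' p (b - p)).filterMap f,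
    (List.range' p (b + 1 - p)).filterMap f', (List.range' b (n - b)).filterMap f, ?_, ?_, ?_, ?_⟩
  · rw [hsplit (a := p) (b := b) (by omega) (min_le_right q n), List.filterMap_append,
      List.filterMap_append]
  · have hshift : List.range' (b + 1) (n - b) = (List.range' b (n - b)).map (1 + ·) := by
      rw [List.map_add_range', Nat.add_comm]
    rw [hsplit (a := p) (b := b + 1) (by omega) (by omega), List.filterMap_append,
      List.filterMap_append, show n + 1 - (b + 1) = n - b by omega, hshift, List.filterMap_map]
    congr 1
    · congr 1
      exact List.filterMap_congr fun i hi => hlo i (by simpa using hi)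
    · exact List.filterMap_congr fun i hi => hhi i (by have := List.mem_range'_1.mp hi; omega)
  · exact (List.length_filterMap_le _ _).trans (by simp; omega)
  · exact (List.length_filterMap_le _ _).trans (by simp; omega)

-- A lawful `BEq` rather than `DecidableEq`, to match the instance `List.count` uses on
-- `List A × A` in `count_ctxStr`.
variable {ι : Type*} [Fintype ι] [BEq β] [LawfulBEq β]

lemma sum_count_le_length (e : ι ↪ β) (W : List β) : ∑ i, W.count (e i) ≤ W.length := by
  classical
  obtain rfl : ‹BEq β› = instBEqOfDecidableEq := lawful_beq_subsingleton _ _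
  calc ∑ i, W.count (e i) = ∑ b ∈ univ.map e, W.count b := by rw [sum_map]
    _ ≤ ∑ b ∈ univ.map e ∪ W.toFinset, W.count b := sum_le_sum_of_subset subset_union_left
    _ = W.length := by
      simpa using Multiset.sum_count_eq_card (s := univ.map e ∪ W.toFinset) (m := (W : Multiset β))
        fun b hb => mem_union_right _ (by simpa using hb)

lemma sum_abs_count_append_sub_le (e : ι ↪ β) (X W W' Y : List β) :
    ∑ i, |((X ++ W ++ Y).count (e i) : ℝ) - (X ++ W' ++ Y).count (e i)| ≤
      W.length + W'.length := by
  have hterm : ∀ i, |((X ++ W ++ Y).count (e i) : ℝ) - (X ++ W' ++ Y).count (e i)| ≤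
      W.count (e i) + W'.count (e i) := fun i => by
    simp only [List.count_append]
    push_cast
    rw [abs_le]
    constructor <;> linarith [(W.count (e i)).cast_nonneg (α := ℝ),
      (W'.count (e i)).cast_nonneg (α := ℝ)]
  refine (sum_le_sum fun i _ => hterm i).trans ?_
  rw [sum_add_distrib]
  exact_mod_cast add_le_add (sum_count_le_length e W) (sum_count_le_length e W')

end CountBounds

lemma exists_ctxPairs_insert_eq {A : Type*} (k : ℕ) (T₁ T₂ : List A) (c : A) :
    ∃ X W W' Y, ctxPairs k (T₁ ++ T₂) = X ++ W ++ Y ∧ ctxPairs k (T₁ ++ c :: T₂) = X ++ W' ++ Y ∧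
      W.length ≤ k ∧ W'.length ≤ k + 1 := by
  have hlen : (T₁ ++ c :: T₂).length = (T₁ ++ T₂).length + 1 := by simp; omega
  simpa [ctxPairs, hlen] using exists_filterMap_range_eq_of_insert (ctxPairAt k (T₁ ++ T₂))
    (ctxPairAt k (T₁ ++ c :: T₂)) (Nat.le_add_right T₁.length k) (by simp)
    (fun i hi => (ctxPairAt_append_of_lt k T₁ T₂ (c :: T₂) hi).symm)
    (fun i hi => ctxPairAt_insert_of_le k T₁ T₂ c hi)

section Insertion

variable {A : Type*} [Fintype A] [DecidableEq A]

lemma sum_abs_count_ctxStr_insert_sub_le (k : ℕ) (T₁ T₂ : List A) (c : A) :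
    ∑ s : Fin k → A, ∑ a, |((ctxStr (T₁ ++ T₂) (List.ofFn s)).count a : ℝ) -
      (ctxStr (T₁ ++ c :: T₂) (List.ofFn s)).count a| ≤ 2 * k + 1 := by
  obtain ⟨X, W, W', Y, h, h', hW, hW'⟩ := exists_ctxPairs_insert_eq k T₁ T₂ c
  let e : (Fin k → A) × A ↪ List A × A :=
    ⟨fun x => (List.ofFn x.1, x.2), fun x y hxy => by
      simp only [Prod.mk.injEq] at hxy
      exact Prod.ext (List.ofFn_injective hxy.1) hxy.2⟩
  have hbound := sum_abs_count_append_sub_le e X W W' Y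
  rw [Fintype.sum_prod_type] at hbound
  simp only [count_ctxStr, List.length_ofFn, h, h']
  refine hbound.trans ?_
  have : (W.length : ℝ) + W'.length ≤ k + (k + 1) := by exact_mod_cast add_le_add hW hW'
  linarith

lemma abs_length_mul_Hk_insert_sub_le (k : ℕ) {N : ℕ} (T₁ T₂ : List A) (c : A)
    (hN : (T₁ ++ T₂).length + 1 ≤ N) :
    |(T₁ ++ T₂).length * Hk k (T₁ ++ T₂) - (T₁ ++ c :: T₂).length * Hk k (T₁ ++ c :: T₂)| ≤
      2 * (2 * k + 1) * (logb 2 (N + 1) + 2) := by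
  have hlog := logb_two_natCast_nonneg (N + 1)
  push_cast at hlog
  refine (abs_length_mul_Hk_sub_le k (N := N) (by omega) (by simp at hN ⊢; omega)).trans ?_
  gcongr
  exact sum_abs_count_ctxStr_insert_sub_le k T₁ T₂ c

end Insertion

lemma abs_length_mul_Hk_sub_le_of_edit {A : Type*} [Fintype A] [DecidableEq A] (k : ℕ)
    {T T' : List A}
    (hedit : (∃ (T₁ T₂ : List A) (c c' : A), T = T₁ ++ c :: T₂ ∧ T' = T₁ ++ c' :: T₂) ∨
      (∃ (T₁ T₂ : List A) (c : A), T = T₁ ++ T₂ ∧ T' = T₁ ++ c :: T₂) ∨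
      (∃ (T₁ T₂ : List A) (c : A), T = T₁ ++ c :: T₂ ∧ T' = T₁ ++ T₂)) :
    |T.length * Hk k T - T'.length * Hk k T'| ≤ 4 * (2 * k + 1) * (logb 2 (T.length + 2) + 2) := by
  rw [show (T.length : ℝ) + 2 = (T.length + 1 : ℕ) + 1 by push_cast; ring]
  have hL : 0 ≤ 2 * (2 * (k : ℝ) + 1) * (logb 2 ((T.length + 1 : ℕ) + 1) + 2) := by
    have hlog := logb_two_natCast_nonneg (T.length + 1 + 1)
    rw [Nat.cast_succ] at hlog
    positivity
  rcases hedit with ⟨T₁, T₂, c, c', rfl, rfl⟩ | ⟨T₁, T₂, c, rfl, rfl⟩ | ⟨T₁, T₂, c, rfl, rfl⟩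
  · have hN : (T₁ ++ T₂).length + 1 ≤ (T₁ ++ c :: T₂).length + 1 := by simp
    have hdel := abs_length_mul_Hk_insert_sub_le k T₁ T₂ c hN
    have hins := abs_length_mul_Hk_insert_sub_le k T₁ T₂ c' hN
    have hlen : (T₁ ++ c' :: T₂).length = (T₁ ++ c :: T₂).length := by simp
    rw [hlen]
    calc _ ≤ _ := abs_sub_le _ ((T₁ ++ T₂).length * Hk k (T₁ ++ T₂)) _
      _ ≤ _ := add_le_add ((abs_sub_comm _ _).trans_le hdel) (hlen ▸ hins)
      _ = _ := by ring
  · exact (abs_length_mul_Hk_insert_sub_le k T₁ T₂ c le_rfl).trans (by linarith)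
  · rw [abs_sub_comm]
    exact (abs_length_mul_Hk_insert_sub_le k T₁ T₂ c
      (N := (T₁ ++ c :: T₂).length + 1) (by simp)).trans (by linarith)

lemma logb_add_two_add_two_le {x : ℝ} (hx : 1 ≤ x) : logb 2 (x + 2) + 2 ≤ 4 * logb 2 (x + 1) := by
  have hone : 1 ≤ logb 2 (x + 1) := by
    rw [le_logb_iff_rpow_le one_lt_two (by linarith)]
    norm_num
    linarith
  have hdouble : logb 2 (x + 2) ≤ 1 + logb 2 (x + 1) :=
    calc logb 2 (x + 2) ≤ logb 2 (2 * (x + 1)) :=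
          logb_le_logb_of_le one_lt_two (by linarith) (by linarith)
      _ = 1 + logb 2 (x + 1) := by
        rw [logb_mul two_ne_zero (by linarith), logb_self_eq_one one_lt_two]
  linarith

theorem stmt10 : ∃ C : ℝ, 0 < C ∧
    ∀ (A : Type) (_ : Fintype A) (_ : DecidableEq A) (T T' : List A) (k : ℕ),
      ((∃ (T₁ T₂ : List A) (c c' : A), T = T₁ ++ c :: T₂ ∧ T' = T₁ ++ c' :: T₂) ∨
       (∃ (T₁ T₂ : List A) (c : A), T = T₁ ++ T₂ ∧ T' = T₁ ++ c :: T₂) ∨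
       (∃ (T₁ T₂ : List A) (c : A), T = T₁ ++ c :: T₂ ∧ T' = T₁ ++ T₂)) →
      |(T.length : ℝ) * Hk k T - (T'.length : ℝ) * Hk k T'| ≤
        C * (k + 1) * (Real.logb 2 (T.length + 1) + Real.logb 2 (Fintype.card A)) := by
  refine ⟨32, by norm_num, fun A _ _ T T' k hedit => ?_⟩
  have hlogA := logb_two_natCast_nonneg (Fintype.card A)
  have hlogT := logb_two_natCast_nonneg (T.length + 1)
  push_cast at hlogT
  rcases Nat.eq_zero_or_pos T.length with hT | hT
  · have hT' : T'.length ≤ 1 := by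
      rcases hedit with ⟨T₁, T₂, c, c', rfl, rfl⟩ | ⟨T₁, T₂, c, rfl, rfl⟩ | ⟨T₁, T₂, c, rfl, rfl⟩ <;>
        simp only [List.length_append, List.length_cons] at hT ⊢ <;> omega
    have hlhs : (T.length : ℝ) * Hk k T - T'.length * Hk k T' = 0 := by
      rw [hT, Hk_eq_zero_of_length_le_one k hT']
      simp
    rw [hlhs, abs_zero]
    exact mul_nonneg (by positivity) (add_nonneg hlogT hlogA)
  have hT : (1 : ℝ) ≤ T.length := by exact_mod_cast hT
  calc _ ≤ 4 * (2 * k + 1) * (logb 2 (T.length + 2) + 2) :=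
        abs_length_mul_Hk_sub_le_of_edit k hedit
    _ ≤ 4 * (2 * (k + 1)) * (4 * logb 2 (T.length + 1)) := by
        have hpos : 0 ≤ logb 2 ((T.length : ℝ) + 2) + 2 := by
          linarith [logb_nonneg one_lt_two (by linarith : (1 : ℝ) ≤ T.length + 2)]
        exact mul_le_mul (by linarith) (logb_add_two_add_two_le hT) hpos (by positivity)
    _ ≤ 32 * (k + 1) * (logb 2 (T.length + 1) + logb 2 (Fintype.card A)) := by
        nlinarith
end
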